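/- arXiv:2010.06420 — 2 statements merged into one kernel-verified Lean document; each statement's English description precedes it below -/
import Mathlib

section
/- Let W:ℝ^d→ℝ be a C² convex function, let t↦X_t be a continuous path in ℝ^d, and let Y:[0,∞)→ℝ^{d×d} solve the matrix ODE Y₀ = I and dY_t/dt = −∇²W(X_t)·Y_t. Then for every t ≥ 0, ‖Y_t‖² ≤ exp( −2∫₀ᵗ λ_min(∇²W(X_s)) ds ), where ‖·‖ is the spectral (operator) norm and λ_min(∇²W(x)) is the smallest eigenvalue of the Hessian of W at x. -/
open Real

/-- Smallest eigenvalue of the Hessian of `W` at `x`, as the infimum of its quadratic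
form over unit vectors. -/
noncomputable def lamMin {d : ℕ} (W : EuclideanSpace ℝ (Fin d) → ℝ)
    (x : EuclideanSpace ℝ (Fin d)) : ℝ :=
  sInf {t : ℝ | ∃ u : EuclideanSpace ℝ (Fin d), ‖u‖ = 1 ∧
    (inner ℝ u (fderiv ℝ (gradient W) x u) : ℝ) = t}

variable {d : ℕ}

/-- auxiliary: min of quadratic form over unit sphere -/
noncomputable def Fmin {d : ℕ} (A : EuclideanSpace ℝ (Fin d) →L[ℝ] EuclideanSpace ℝ (Fin d)) : ℝ :=
  sInf {t : ℝ | ∃ u : EuclideanSpace ℝ (Fin d), ‖u‖ = 1 ∧ (inner ℝ u (A u) : ℝ) = t}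

lemma bddBelow_Fset (A : EuclideanSpace ℝ (Fin d) →L[ℝ] EuclideanSpace ℝ (Fin d)) :
    BddBelow {t : ℝ | ∃ u : EuclideanSpace ℝ (Fin d), ‖u‖ = 1 ∧ (inner ℝ u (A u) : ℝ) = t} := by
  refine ⟨-‖A‖, fun t ht => ?_⟩
  obtain ⟨u, hu, rfl⟩ := ht
  have h1 : |(inner ℝ u (A u) : ℝ)| ≤ ‖u‖ * ‖A u‖ := abs_real_inner_le_norm u (A u)
  have h2 : ‖A u‖ ≤ ‖A‖ * ‖u‖ := A.le_opNorm u
  rw [hu, one_mul] at h1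
  rw [hu, mul_one] at h2
  nlinarith [abs_le.mp h1]

lemma Fset_nonempty (hd : 0 < d) (A : EuclideanSpace ℝ (Fin d) →L[ℝ] EuclideanSpace ℝ (Fin d)) :
    {t : ℝ | ∃ u : EuclideanSpace ℝ (Fin d), ‖u‖ = 1 ∧ (inner ℝ u (A u) : ℝ) = t}.Nonempty := by
  refine ⟨_, EuclideanSpace.single ⟨0, hd⟩ (1:ℝ), ?_, rfl⟩
  simp [EuclideanSpace.norm_single]

lemma Fmin_le {A : EuclideanSpace ℝ (Fin d) →L[ℝ] EuclideanSpace ℝ (Fin d)}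
    {u : EuclideanSpace ℝ (Fin d)} (hu : ‖u‖ = 1) : Fmin A ≤ (inner ℝ u (A u) : ℝ) :=
  csInf_le (bddBelow_Fset A) ⟨u, hu, rfl⟩

lemma Fmin_quad_le (A : EuclideanSpace ℝ (Fin d) →L[ℝ] EuclideanSpace ℝ (Fin d))
    (u : EuclideanSpace ℝ (Fin d)) : Fmin A * ‖u‖ ^ 2 ≤ (inner ℝ u (A u) : ℝ) := by
  rcases eq_or_ne u 0 with rfl | hu
  · simp
  · have hnu : (0:ℝ) < ‖u‖ := norm_pos_iff.mpr hu
    have h1 : ‖(‖u‖⁻¹ : ℝ) • u‖ = 1 := by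
      rw [norm_smul]; simp [abs_of_pos hnu, inv_mul_cancel₀ hnu.ne']
    have h2 := Fmin_le (A := A) h1
    rw [A.map_smul, real_inner_smul_left, real_inner_smul_right] at h2
    obtain ⟨c, hc⟩ : ∃ c, (inner ℝ u (A u) : ℝ) = c := ⟨_, rfl⟩
    rw [hc] at h2 ⊢
    have h3 := mul_le_mul_of_nonneg_right h2 (sq_nonneg (‖u‖ : ℝ))
    have h4 : ‖u‖⁻¹ * (‖u‖⁻¹ * c) * ‖u‖ ^ 2 = c := by
      have hne : (‖u‖:ℝ) ≠ 0 := hnu.ne'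
      field_simp
    rw [h4] at h3
    exact h3

lemma Fmin_lipschitz (hd : 0 < d) :
    LipschitzWith 1 (Fmin (d := d)) := by
  have key : ∀ A B : EuclideanSpace ℝ (Fin d) →L[ℝ] EuclideanSpace ℝ (Fin d),
      Fmin A ≤ Fmin B + ‖A - B‖ := by
    intro A B
    have : Fmin A - ‖A - B‖ ≤ Fmin B := by
      refine le_csInf (Fset_nonempty hd B) ?_
      rintro t ⟨u, hu, rfl⟩
      have h1 : Fmin A ≤ (inner ℝ u (A u) : ℝ) := Fmin_le hu
      have h2 : (inner ℝ u (A u) : ℝ) - (inner ℝ u (B u) : ℝ) = (inner ℝ u ((A - B) u) : ℝ) := by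
        simp [inner_sub_right]
      have h3 : |(inner ℝ u ((A - B) u) : ℝ)| ≤ ‖A - B‖ := by
        have := abs_real_inner_le_norm u ((A - B) u)
        have h4 := (A - B).le_opNorm u
        rw [hu, one_mul] at this
        rw [hu, mul_one] at h4
        linarith [this.trans h4]
      have := abs_le.mp h3
      linarith
    linarith
  refine LipschitzWith.of_dist_le_mul fun A B => ?_
  rw [Real.dist_eq, dist_eq_norm, NNReal.coe_one, one_mul, abs_sub_le_iff]
  constructor
  · linarith [key A B]
  · have := key B A
    rw [norm_sub_rev] at this
    linarith

/-- Lemma B.6 (i), contraction of the first variation process: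
if `Y₀ = I` and `Y' = −∇²W(X_t) Y_t` along a continuous path `X`, then
`‖Y_t‖² ≤ exp(−2 ∫₀ᵗ λ_min(∇²W(X_s)) ds)` for the operator norm. -/
theorem first_variation_contraction {d : ℕ}
    (W : EuclideanSpace ℝ (Fin d) → ℝ) (hW : ContDiff ℝ 2 W)
    (hWconv : ConvexOn ℝ Set.univ W)
    (X : ℝ → EuclideanSpace ℝ (Fin d)) (hX : Continuous X)
    (Y : ℝ → (EuclideanSpace ℝ (Fin d) →L[ℝ] EuclideanSpace ℝ (Fin d)))
    (hY0 : Y 0 = ContinuousLinearMap.id ℝ (EuclideanSpace ℝ (Fin d)))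
    (hY : ∀ t : ℝ, HasDerivAt Y (-((fderiv ℝ (gradient W) (X t)).comp (Y t))) t) :
    ∀ t : ℝ, 0 ≤ t →
      ‖Y t‖ ^ 2 ≤ Real.exp (-2 * ∫ s in (0 : ℝ)..t, lamMin W (X s)) := by
  intro t ht
  rcases Nat.eq_zero_or_pos d with hd | hd
  · subst hd
    have hz : ‖Y t‖ = 0 := by
      have h0 : Y t = 0 := by ext x i; exact i.elim0
      rw [h0, norm_zero]
    rw [hz]
    norm_num
    positivity
  · set H : ℝ → (EuclideanSpace ℝ (Fin d) →L[ℝ] EuclideanSpace ℝ (Fin d)) :=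
      fun s => fderiv ℝ (gradient W) (X s) with hHdef
    have hgrad : ContDiff ℝ 1 (gradient W) := by
      have h1 : ContDiff ℝ 1 (fun x => fderiv ℝ W x) := hW.fderiv_right (le_refl 2)
      exact (InnerProductSpace.toDual ℝ (EuclideanSpace ℝ (Fin d))).symm.contDiff.comp h1
    have hHcont : Continuous H := (hgrad.continuous_fderiv one_ne_zero).comp hX
    set lam : ℝ → ℝ := fun s => lamMin W (X s) with hlamdef
    have hlamF : lam = Fmin ∘ H := rfl
    have hlam : Continuous lam := by
      rw [hlamF]; exact (Fmin_lipschitz hd).continuous.comp hHcont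
    set L : ℝ → ℝ := fun u => ∫ s in (0:ℝ)..u, lam s with hLdef
    have hL : ∀ u : ℝ, HasDerivAt L (lam u) u := fun u =>
      intervalIntegral.integral_hasDerivAt_right (hlam.intervalIntegrable 0 u)
        (hlam.stronglyMeasurableAtFilter _ _) hlam.continuousAt
    have key : ∀ v : EuclideanSpace ℝ (Fin d), ‖Y t v‖ ≤ Real.exp (-L t) * ‖v‖ := by
      intro v
      set g : ℝ → ℝ := fun u => (inner ℝ (Y u v) (Y u v) : ℝ) * Real.exp (2 * L u) with hgdef
      have hgder : ∀ u, HasDerivAt g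
          (((inner ℝ (Y u v) ((-((H u).comp (Y u))) v) : ℝ)
              + (inner ℝ ((-((H u).comp (Y u))) v) (Y u v) : ℝ)) * Real.exp (2 * L u)
            + (inner ℝ (Y u v) (Y u v) : ℝ) * (Real.exp (2 * L u) * (2 * lam u))) u := by
        intro u
        have hYv : HasDerivAt (fun s => Y s v) ((-((H u).comp (Y u))) v) u := by
          simpa using (hY u).clm_apply (hasDerivAt_const u v)
        have hin := hYv.inner ℝ hYv
        have hexp : HasDerivAt (fun s => Real.exp (2 * L s)) (Real.exp (2 * L u) * (2 * lam u)) u :=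
          ((hL u).const_mul 2).exp
        exact hin.mul hexp
      have hmono : Antitone g := by
        refine antitone_of_deriv_nonpos (fun u => (hgder u).differentiableAt) (fun u => ?_)
        rw [(hgder u).deriv]
        have hq := Fmin_quad_le (H u) (Y u v)
        have hnorm : (inner ℝ (Y u v) (Y u v) : ℝ) = ‖Y u v‖ ^ 2 := real_inner_self_eq_norm_sq _
        have h1 : (inner ℝ (Y u v) ((-((H u).comp (Y u))) v) : ℝ)
            = -(inner ℝ (Y u v) ((H u) ((Y u) v)) : ℝ) := by
          simp [inner_neg_right]
        have h2 : (inner ℝ ((-((H u).comp (Y u))) v) (Y u v) : ℝ)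
            = -(inner ℝ (Y u v) ((H u) ((Y u) v)) : ℝ) := by
          rw [real_inner_comm]; simp [inner_neg_right]
        rw [h1, h2, hnorm]
        have he := Real.exp_pos (2 * L u)
        have hlamu : lam u = Fmin (H u) := rfl
        rw [hlamu]
        nlinarith [mul_le_mul_of_nonneg_left hq he.le]
      have hg0 : g 0 = ‖v‖ ^ 2 := by
        show (inner ℝ ((Y 0) v) ((Y 0) v) : ℝ) * Real.exp (2 * L 0) = ‖v‖ ^ 2
        rw [hY0, ContinuousLinearMap.id_apply, real_inner_self_eq_norm_sq,
          show L 0 = 0 from intervalIntegral.integral_same, mul_zero, Real.exp_zero, mul_one]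
      have hgt : g t ≤ ‖v‖ ^ 2 := hg0 ▸ hmono ht
      have hgt' : ‖Y t v‖ ^ 2 * Real.exp (2 * L t) ≤ ‖v‖ ^ 2 := by
        have hnorm : (inner ℝ (Y t v) (Y t v) : ℝ) = ‖Y t v‖ ^ 2 := real_inner_self_eq_norm_sq _
        rw [hgdef] at hgt
        rw [← hnorm]
        exact hgt
      have hkey : Real.exp (-L t) * Real.exp (-L t) * Real.exp (2 * L t) = 1 := by
        rw [← Real.exp_add, ← Real.exp_add]
        norm_num
        ring
      have hEpos := Real.exp_pos (2 * L t)
      have hEq : (Real.exp (-L t) * ‖v‖) ^ 2 * Real.exp (2 * L t) = ‖v‖ ^ 2 := by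
        linear_combination ‖v‖ ^ 2 * hkey
      have h5 : ‖Y t v‖ ^ 2 ≤ (Real.exp (-L t) * ‖v‖) ^ 2 :=
        le_of_mul_le_mul_right (by rw [hEq]; exact hgt') hEpos
      exact (abs_le_of_sq_le_sq' h5 (by positivity)).2
    have hop : ‖Y t‖ ≤ Real.exp (-L t) :=
      (Y t).opNorm_le_bound (Real.exp_pos _).le key
    calc ‖Y t‖ ^ 2 ≤ Real.exp (-L t) ^ 2 := pow_le_pow_left₀ (norm_nonneg _) hop 2
      _ = Real.exp (-2 * L t) := by
          rw [sq, ← Real.exp_add]; congr 1; ring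
end

section
/- Let p ∈ (1/2, 1] and define W:ℝ^d→ℝ by W(x) = (1+|x|²)^p. Then W is C² and for every x∈ℝ^d and every unit vector u∈ℝ^d, 2p(2p−1)·W(x)^{−(1−p)/p} ≤ ⟨∇²W(x)u, u⟩ ≤ 2p·W(x)^{−(1−p)/p}. In particular W satisfies assumption (H^{q,r}_{KL}) with r = q = (1−p)/p, 𝔠₁ = 2p(2p−1) and 𝔠₂ = 2p. -/
open Real

/-- Remark 2.3, the example `W(x) = (1+|x|²)^p`: for `p ∈ (1/2,1]`,
`W` is `C²` and for every `x` and every unit vector `u`,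
`2p(2p−1) W(x)^{−(1−p)/p} ≤ ⟨∇²W(x)u,u⟩ ≤ 2p W(x)^{−(1−p)/p}`; in particular `W`
satisfies (H^{q,r}_{KL}) with `r = q = (1−p)/p`, `𝔠₁ = 2p(2p−1)` and `𝔠₂ = 2p`. -/
theorem example_KL (d : ℕ) (p : ℝ) (hp1 : 1 / 2 < p) (hp2 : p ≤ 1) :
    ContDiff ℝ 2 (fun x : EuclideanSpace ℝ (Fin d) => (1 + ‖x‖ ^ 2) ^ p) ∧
    (∀ x : EuclideanSpace ℝ (Fin d),
      0 < (1 + ‖x‖ ^ 2) ^ p) ∧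
    ConvexOn ℝ Set.univ (fun x : EuclideanSpace ℝ (Fin d) => (1 + ‖x‖ ^ 2) ^ p) ∧
    -- Hessian quadratic form bounds, i.e. (H^{q,r}_{KL}) with `r = q = (1−p)/p`,
    -- `𝔠₁ = 2p(2p−1)`, `𝔠₂ = 2p`
    (∀ x u : EuclideanSpace ℝ (Fin d),
      2 * p * (2 * p - 1) * ((1 + ‖x‖ ^ 2) ^ p) ^ (-((1 - p) / p)) * ‖u‖ ^ 2 ≤
        fderiv ℝ (fderiv ℝ (fun x : EuclideanSpace ℝ (Fin d) => (1 + ‖x‖ ^ 2) ^ p)) x u u ∧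
      fderiv ℝ (fderiv ℝ (fun x : EuclideanSpace ℝ (Fin d) => (1 + ‖x‖ ^ 2) ^ p)) x u u ≤
        2 * p * ((1 + ‖x‖ ^ 2) ^ p) ^ (-((1 - p) / p)) * ‖u‖ ^ 2) := by
  have hp0 : 0 < p := by linarith
  set E := EuclideanSpace ℝ (Fin d)
  set W : E → ℝ := fun x => (1 + ‖x‖ ^ 2) ^ p with hW
  have hgpos : ∀ x : E, (0:ℝ) < 1 + ‖x‖ ^ 2 := fun x => by positivity
  -- inner function
  have hinner : ∀ x : E, HasFDerivAt (fun y : E => 1 + ‖y‖ ^ 2)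
      (2 • (innerSL ℝ x)) x := by
    intro x
    simpa using ((hasStrictFDerivAt_norm_sq x).hasFDerivAt).const_add 1
  have hinnerCD : ContDiff ℝ 2 (fun y : E => 1 + ‖y‖ ^ 2) :=
    contDiff_const.add (contDiff_norm_sq ℝ)
  -- C² smoothness of W
  have hC2 : ContDiff ℝ 2 W := by
    rw [contDiff_iff_contDiffAt]
    intro x
    exact (Real.contDiffAt_rpow_const_of_ne (hgpos x).ne').comp x hinnerCD.contDiffAt
  -- first derivative of W
  have hW1 : ∀ x : E, HasFDerivAt W
      ((2 * p * (1 + ‖x‖ ^ 2) ^ (p - 1)) • (innerSL ℝ x)) x := by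
    intro x
    have h := (Real.hasDerivAt_rpow_const (p := p)
      (Or.inl (hgpos x).ne')).comp_hasFDerivAt x (hinner x)
    refine h.congr_fderiv ?_
    ext y
    simp only [ContinuousLinearMap.smul_apply, smul_eq_mul, innerSL_apply_apply,
      two_smul, ContinuousLinearMap.add_apply]
    ring
  have hfderivW : ∀ x : E, fderiv ℝ W x
      = (2 * p * (1 + ‖x‖ ^ 2) ^ (p - 1)) • (innerSL ℝ x) := fun x => (hW1 x).fderiv
  -- key second-derivative formula
  have hQ : ∀ x u : E, fderiv ℝ (fderiv ℝ W) x u u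
      = 4 * p * (p - 1) * (1 + ‖x‖ ^ 2) ^ (p - 2) * (inner ℝ x u) ^ 2
        + 2 * p * (1 + ‖x‖ ^ 2) ^ (p - 1) * ‖u‖ ^ 2 := by
    intro x u
    have hdiff : DifferentiableAt ℝ (fderiv ℝ W) x :=
      ((hC2.fderiv_right (m := 1) le_rfl).differentiable (by norm_num)) x
    have happ : fderiv ℝ (fderiv ℝ W) x u u
        = fderiv ℝ (fun y => fderiv ℝ W y u) x u := by
      rw [fderiv_clm_apply hdiff (differentiableAt_const u)]
      simp
    rw [happ]
    have hfun : (fun y => fderiv ℝ W y u)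
        = fun y : E => (2 * p * (1 + ‖y‖ ^ 2) ^ (p - 1)) * (inner ℝ y u) := by
      funext y
      rw [hfderivW y]
      simp [real_inner_comm]
    rw [hfun]
    -- derivative of the coefficient
    have hcoef : HasFDerivAt (fun y : E => 2 * p * (1 + ‖y‖ ^ 2) ^ (p - 1))
        ((2 * p) • (((p - 1) * (1 + ‖x‖ ^ 2) ^ (p - 2)) • (2 • (innerSL ℝ x)))) x := by
      have h := ((Real.hasDerivAt_rpow_const (p := p - 1)
        (Or.inl (hgpos x).ne')).comp_hasFDerivAt x (hinner x)).const_mul (2 * p)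
      refine h.congr_fderiv ?_
      rw [show p - 1 - 1 = p - 2 by ring]
    -- derivative of y ↦ ⟪y, u⟫
    have hlin : HasFDerivAt (fun y : E => (inner ℝ y u)) (innerSL ℝ u) x := by
      have : (fun y : E => (inner ℝ y u)) = fun y : E => (innerSL ℝ u) y := by
        funext y; simp [real_inner_comm]
      rw [this]
      exact (innerSL ℝ u).hasFDerivAt
    have hprod : HasFDerivAt (fun y : E => 2 * p * (1 + ‖y‖ ^ 2) ^ (p - 1) * inner ℝ y u) _ x :=
      hcoef.mul hlin
    rw [hprod.fderiv]
    have hxu : (inner ℝ u u) = ‖u‖ ^ 2 := real_inner_self_eq_norm_sq u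
    simp only [ContinuousLinearMap.add_apply, ContinuousLinearMap.smul_apply,
      innerSL_apply_apply, smul_eq_mul, hxu]
    ring
  -- exponent simplification
  have hexp : ∀ x : E, ((1 + ‖x‖ ^ 2) ^ p) ^ (-((1 - p) / p)) = (1 + ‖x‖ ^ 2) ^ (p - 1) := by
    intro x
    rw [← Real.rpow_mul (le_of_lt (hgpos x))]
    congr 1
    field_simp
    ring
  refine ⟨hC2, fun x => Real.rpow_pos_of_pos (hgpos x) p, ?_, ?_⟩
  · -- convexity
    set g : ℝ → ℝ := fun t => (1 + t ^ 2) ^ p with hg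
    have hgt : ∀ t : ℝ, (0:ℝ) < 1 + t ^ 2 := fun t => by positivity
    have hd1 : ∀ t : ℝ, HasDerivAt g (2 * p * t * (1 + t ^ 2) ^ (p - 1)) t := by
      intro t
      have hin : HasDerivAt (fun s : ℝ => 1 + s ^ 2) (2 * t) t := by
        simpa using (hasDerivAt_pow 2 t).const_add 1
      have h := (Real.hasDerivAt_rpow_const (p := p)
        (Or.inl (hgt t).ne')).comp t hin
      convert h using 1
      exacts [rfl, rfl, rfl, by ring]
    have hderivg : deriv g = fun t => 2 * p * t * (1 + t ^ 2) ^ (p - 1) :=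
      funext fun t => (hd1 t).deriv
    have hd2 : ∀ t : ℝ, HasDerivAt (fun s => 2 * p * s * (1 + s ^ 2) ^ (p - 1))
        (2 * p * (1 + t ^ 2) ^ (p - 1)
          + 2 * p * t * ((p - 1) * (1 + t ^ 2) ^ (p - 2) * (2 * t))) t := by
      intro t
      have hin : HasDerivAt (fun s : ℝ => 1 + s ^ 2) (2 * t) t := by
        simpa using (hasDerivAt_pow 2 t).const_add 1
      have hrp : HasDerivAt (fun s : ℝ => (1 + s ^ 2) ^ (p - 1))
          ((p - 1) * (1 + t ^ 2) ^ (p - 2) * (2 * t)) t := by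
        have h := (Real.hasDerivAt_rpow_const (p := p - 1)
          (Or.inl (hgt t).ne')).comp t hin
        convert h using 1
        exacts [rfl, rfl, rfl, by ring_nf]
      have hlin : HasDerivAt (fun s : ℝ => 2 * p * s) (2 * p) t := by
        simpa using (hasDerivAt_id t).const_mul (2 * p)
      have := hlin.mul hrp
      convert this using 1
      exacts [rfl, rfl, rfl]
    have hconvg : ConvexOn ℝ Set.univ g := by
      apply convexOn_univ_of_deriv2_nonneg
        (fun t => (hd1 t).differentiableAt)
        (by rw [hderivg]; exact fun t => (hd2 t).differentiableAt)
      intro t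
      simp only [Function.iterate_succ, Function.iterate_zero, Function.comp_apply, id_eq]
      rw [hderivg, (hd2 t).deriv]
      have h1 : (1 + t ^ 2) ^ (p - 1) = (1 + t ^ 2) ^ (p - 2) * (1 + t ^ 2) := by
        rw [← Real.rpow_add_one (hgt t).ne' (p - 2)]
        ring_nf
      rw [h1]
      have h2 : (0:ℝ) ≤ (1 + t ^ 2) ^ (p - 2) := (Real.rpow_pos_of_pos (hgt t) _).le
      have key : (0:ℝ) ≤ 2 * p * (1 + t ^ 2) ^ (p - 2) * (1 + (2 * p - 1) * t ^ 2) :=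
        mul_nonneg (by positivity) (by nlinarith [sq_nonneg t])
      nlinarith [key]
    have hmono : MonotoneOn g (Set.Ici (0:ℝ)) := by
      intro a ha b hb hab
      apply Real.rpow_le_rpow (hgt a).le _ hp0.le
      simp only [Set.mem_Ici] at ha hb
      have := pow_le_pow_left₀ ha hab 2
      linarith
    refine ⟨convex_univ, fun x _ y _ a b ha hb hab => ?_⟩
    have key : W (a • x + b • y) ≤ g (a * ‖x‖ + b * ‖y‖) := by
      have h1 : W (a • x + b • y) = g ‖a • x + b • y‖ := rfl
      rw [h1]
      apply hmono (Set.mem_Ici.mpr (norm_nonneg _))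
        (Set.mem_Ici.mpr (by positivity))
      calc ‖a • x + b • y‖ ≤ ‖a • x‖ + ‖b • y‖ := norm_add_le _ _
        _ = a * ‖x‖ + b * ‖y‖ := by
            rw [norm_smul, norm_smul, Real.norm_eq_abs, Real.norm_eq_abs,
              abs_of_nonneg ha, abs_of_nonneg hb]
    calc W (a • x + b • y) ≤ g (a * ‖x‖ + b * ‖y‖) := key
      _ = g (a • ‖x‖ + b • ‖y‖) := by norm_num
      _ ≤ a • g ‖x‖ + b • g ‖y‖ :=
          hconvg.2 (Set.mem_univ _) (Set.mem_univ _) ha hb hab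
      _ = a • W x + b • W y := rfl
  · -- Hessian bounds
    intro x u
    rw [hQ x u, hexp x]
    set g := 1 + ‖x‖ ^ 2 with hgdef
    have hg0 : (0:ℝ) < g := hgpos x
    have hgp1 : (0:ℝ) < g ^ (p - 1) := Real.rpow_pos_of_pos hg0 _
    have hgp2 : (0:ℝ) < g ^ (p - 2) := Real.rpow_pos_of_pos hg0 _
    have hfac : g ^ (p - 1) = g ^ (p - 2) * g := by
      rw [← Real.rpow_add_one hg0.ne' (p - 2)]
      ring_nf
    have hcs : (inner ℝ x u) ^ 2 ≤ ‖x‖ ^ 2 * ‖u‖ ^ 2 := by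
      have := abs_real_inner_le_norm x u
      nlinarith [abs_nonneg (inner ℝ x u), abs_real_inner_le_norm x u,
        sq_abs (inner ℝ x u)]
    have hxg : ‖x‖ ^ 2 ≤ g := by rw [hgdef]; linarith
    constructor
    · -- lower bound
      have h1 : g ^ (p - 2) * (inner ℝ x u) ^ 2 ≤ g ^ (p - 1) * ‖u‖ ^ 2 := by
        rw [hfac]
        calc g ^ (p - 2) * (inner ℝ x u) ^ 2
            ≤ g ^ (p - 2) * (g * ‖u‖ ^ 2) := by
              apply mul_le_mul_of_nonneg_left _ hgp2.le
              calc (inner ℝ x u) ^ 2 ≤ ‖x‖ ^ 2 * ‖u‖ ^ 2 := hcs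
                _ ≤ g * ‖u‖ ^ 2 := by nlinarith [sq_nonneg ‖u‖]
          _ = g ^ (p - 2) * g * ‖u‖ ^ 2 := by ring
      nlinarith [mul_le_mul_of_nonneg_left h1 (by nlinarith : (0:ℝ) ≤ 4 * p * (1 - p))]
    · -- upper bound
      nlinarith [mul_nonneg (mul_nonneg hgp2.le (sq_nonneg (inner ℝ x u)))
        (by nlinarith : (0:ℝ) ≤ 4 * p * (1 - p))]
end
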